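/- Let n ≥ 2, m ≥ 3, and let P be an m-th order, n-dimensional stochastic tensor on S = {1,…,n}. If P is ergodic, then all ever-reaching probabilities equal one: f_{i1 i2 … i_m} = 1 for all i1,…,i_m ∈ S. -/

import Mathlib

open Finset

/-- An `m`-th order, `n`-dimensional tensor with `m = r + 2`: the entry
`p_{i₁ i₂ … i_m}` is written `P i₁ t`, where `t = (i₂, …, i_m)` is the tail of
`m - 1 = r + 1` indices. -/
abbrev HOTensor (n r : ℕ) := Fin n → (Fin (r + 1) → Fin n) → ℝ

/-- `P` is a stochastic tensor. -/
def IsStochasticT {n r : ℕ} (P : HOTensor n r) : Prop :=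
  (∀ i t, 0 ≤ P i t ∧ P i t ≤ 1) ∧ ∀ t, ∑ i : Fin n, P i t = 1

/-- The product `A ⊠ B`:
`(A ⊠ B)_{i₁ i₂ … i_m} = Σ_j a_{i₁ j i₂ … i_{m-1}} b_{j i₂ … i_m}`. -/
def tmul {n r : ℕ} (A B : HOTensor n r) : HOTensor n r :=
  fun i t => ∑ j : Fin n, A i (Fin.cons j (Fin.init t)) * B j t

/-- Tensor powers: `tpow P k` is `P^k`, with entries the `k`-step transition
probabilities `p^{(k)}_{i₁ … i_m}`; `P^0` is the identity tensor. -/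
def tpow {n r : ℕ} (P : HOTensor n r) : ℕ → HOTensor n r
  | 0 => fun i t => if i = t 0 then 1 else 0
  | k + 1 => tmul (tpow P k) P

/-- `fpp P k` is the `(k+1)`-step first passage probability tensor `F^{[k+1]}`:
`f^{[1]} = p`, and `f^{[k+1]}_{i₁ i₂ … i_m} = Σ_{j ≠ i₁} f^{[k]}_{i₁ j i₂ … i_{m-1}} p_{j i₂ … i_m}`. -/
def fpp {n r : ℕ} (P : HOTensor n r) : ℕ → HOTensor n r
  | 0 => P
  | k + 1 => fun i t =>
      ∑ j ∈ Finset.univ.filter (fun j => j ≠ i), fpp P k i (Fin.cons j (Fin.init t)) * P j t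

/-- The ever-reaching probability `f_{i₁ i₂ … i_m} = Σ_{k=1}^∞ f^{[k]}_{i₁ i₂ … i_m}`. -/
noncomputable def everReach {n r : ℕ} (P : HOTensor n r) : HOTensor n r :=
  fun i t => ∑' k : ℕ, fpp P k i t

/-- State `j` is reachable from state `i` (`i → j`): for every choice of
`i₃, …, i_m` there is `k ≥ 0` with `p^{(k)}_{j i i₃ … i_m} > 0`. -/
def Reach {n r : ℕ} (P : HOTensor n r) (i j : Fin n) : Prop :=
  ∀ u : Fin r → Fin n, ∃ k : ℕ, 0 < tpow P k j (Fin.cons i u)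

/-- States `i` and `j` communicate (`i ↔ j`). -/
def Comm {n r : ℕ} (P : HOTensor n r) (i j : Fin n) : Prop :=
  Reach P i j ∧ Reach P j i

/-- State `i` is recurrent: `f_{i i i₃ … i_m} = 1` for all `i₃, …, i_m`. -/
def RecurrentState {n r : ℕ} (P : HOTensor n r) (i : Fin n) : Prop :=
  ∀ u : Fin r → Fin n, everReach P i (Fin.cons i u) = 1

/-- State `i` is fully transient: `f_{i i i₃ … i_m} < 1` for all `i₃, …, i_m`. -/
def FullyTransientState {n r : ℕ} (P : HOTensor n r) (i : Fin n) : Prop :=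
  ∀ u : Fin r → Fin n, everReach P i (Fin.cons i u) < 1

/-- `P` is ergodic: for all indices there is `k ≥ 1` with `p^{(k)}_{i₁ … i_m} > 0`. -/
def ErgodicT {n r : ℕ} (P : HOTensor n r) : Prop :=
  ∀ (i : Fin n) (t : Fin (r + 1) → Fin n), ∃ k : ℕ, 1 ≤ k ∧ 0 < tpow P k i t

/-- `P` is regular: some power `P^k`, `k ≥ 1`, has all entries positive. -/
def RegularT {n r : ℕ} (P : HOTensor n r) : Prop :=
  ∃ k : ℕ, 1 ≤ k ∧ ∀ (i : Fin n) (t : Fin (r + 1) → Fin n), 0 < tpow P k i t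

/-- The reduced transition matrix `Q` of `P`: rows and columns are indexed by
`(m-1)`-tuples; the entry in row `(i₁, …, i_{m-1})` and column `(j₁, …, j_{m-1})`
is `p_{i₁ i₂ … i_{m-1} j_{m-1}}` if `j_ℓ = i_{ℓ+1}` for `ℓ = 1, …, m-2`, else `0`. -/
def reducedT {n r : ℕ} (P : HOTensor n r) :
    Matrix (Fin (r + 1) → Fin n) (Fin (r + 1) → Fin n) ℝ :=
  fun u v =>
    if ∀ ℓ : Fin r, v ℓ.castSucc = u ℓ.succ then
      P (u 0) (Fin.snoc (Fin.tail u) (v (Fin.last r)))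
    else 0

/-!
The partial sums `Σ_{ℓ<k} f^{[ℓ+1]}_{i t}` equal `1 - a_k(t)`, where `a_k(t)` is the probability
that the chain started from the window `t` avoids `i` during its first `k` steps. Since a visit to
`i` at step `k` excludes avoiding it, `p^{(k)}_{i t} + a_k(t) ≤ 1`, so ergodicity gives for every
window some `k` with `a_k(t) < 1`. As `a_k` decreases in `k` and there are finitely many windows,
one `K` gives `a_K ≤ M < 1` uniformly, and the Markov property yields `a_{k+K} ≤ M a_k`. Hence
`a_k → 0` geometrically and the ever-reaching probability is `1`.
-/

open Filter Topology

section AvoidProb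

variable {n r : ℕ}

/-- `avoidProb P k i t` is the probability that the chain started from the window `t` does not
visit `i` during its first `k` steps. -/
def avoidProb (P : HOTensor n r) : ℕ → HOTensor n r
  | 0 => fun _ _ => 1
  | k + 1 => fun i t =>
      ∑ j ∈ univ.filter (fun j => j ≠ i), avoidProb P k i (Fin.cons j (Fin.init t)) * P j t

variable {P : HOTensor n r}

lemma tpow_succ_apply (k : ℕ) (i : Fin n) (t : Fin (r + 1) → Fin n) :
    tpow P (k + 1) i t = ∑ j, tpow P k i (Fin.cons j (Fin.init t)) * P j t :=
  rfl

lemma tpow_one : tpow P 1 = P := by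
  funext i t
  rw [tpow_succ_apply]
  simp [tpow]

@[simp]
lemma avoidProb_zero (i : Fin n) (t : Fin (r + 1) → Fin n) : avoidProb P 0 i t = 1 :=
  rfl

lemma avoidProb_succ_apply (k : ℕ) (i : Fin n) (t : Fin (r + 1) → Fin n) :
    avoidProb P (k + 1) i t =
      ∑ j ∈ univ.erase i, avoidProb P k i (Fin.cons j (Fin.init t)) * P j t := by
  simp only [avoidProb, filter_ne']

lemma IsStochasticT.sum_erase_eq_one_sub (hP : IsStochasticT P) (i : Fin n)
    (t : Fin (r + 1) → Fin n) : ∑ j ∈ univ.erase i, P j t = 1 - P i t := by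
  rw [sum_erase_eq_sub (mem_univ i), hP.2 t]

lemma tpow_nonneg (hP : IsStochasticT P) (k : ℕ) (i : Fin n) (t : Fin (r + 1) → Fin n) :
    0 ≤ tpow P k i t := by
  induction k generalizing i t with
  | zero => simp only [tpow]; positivity
  | succ k ih =>
    rw [tpow_succ_apply]
    exact sum_nonneg fun j _ => mul_nonneg (ih _ _) (hP.1 j t).1

lemma tpow_sum_eq_one (hP : IsStochasticT P) (k : ℕ) (t : Fin (r + 1) → Fin n) :
    ∑ i, tpow P k i t = 1 := by
  induction k generalizing t with
  | zero => simp [tpow]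
  | succ k ih =>
    simp only [tpow_succ_apply]
    rw [sum_comm]
    simp only [← sum_mul, ih, one_mul]
    exact hP.2 t

lemma tpow_le_one (hP : IsStochasticT P) (k : ℕ) (i : Fin n) (t : Fin (r + 1) → Fin n) :
    tpow P k i t ≤ 1 :=
  (single_le_sum (fun j _ => tpow_nonneg hP k j t) (mem_univ i)).trans_eq (tpow_sum_eq_one hP k t)

lemma avoidProb_nonneg (hP : IsStochasticT P) (k : ℕ) (i : Fin n) (t : Fin (r + 1) → Fin n) :
    0 ≤ avoidProb P k i t := by
  induction k generalizing t with
  | zero => exact zero_le_one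
  | succ k ih =>
    rw [avoidProb_succ_apply]
    exact sum_nonneg fun j _ => mul_nonneg (ih _) (hP.1 j t).1

lemma avoidProb_antitone (hP : IsStochasticT P) (i : Fin n) (t : Fin (r + 1) → Fin n) :
    Antitone fun k => avoidProb P k i t := by
  suffices h : ∀ k t, avoidProb P (k + 1) i t ≤ avoidProb P k i t from
    antitone_nat_of_succ_le fun k => h k t
  intro k
  induction k with
  | zero =>
    intro t
    simp only [avoidProb_succ_apply, avoidProb_zero, one_mul, hP.sum_erase_eq_one_sub]
    linarith [(hP.1 i t).1]
  | succ k ih =>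
    intro t
    rw [avoidProb_succ_apply, avoidProb_succ_apply]
    exact sum_le_sum fun j _ => mul_le_mul_of_nonneg_right (ih _) (hP.1 j t).1

lemma fpp_nonneg (hP : IsStochasticT P) (k : ℕ) (i : Fin n) (t : Fin (r + 1) → Fin n) :
    0 ≤ fpp P k i t := by
  induction k generalizing t with
  | zero => exact (hP.1 i t).1
  | succ k ih => exact sum_nonneg fun j _ => mul_nonneg (ih _) (hP.1 j t).1

lemma sum_range_fpp_eq_one_sub_avoidProb (hP : IsStochasticT P) (k : ℕ) (i : Fin n)
    (t : Fin (r + 1) → Fin n) : ∑ ℓ ∈ range k, fpp P ℓ i t = 1 - avoidProb P k i t := by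
  induction k generalizing t with
  | zero => simp
  | succ k ih =>
    rw [sum_range_succ', avoidProb_succ_apply]
    simp only [fpp, filter_ne']
    rw [sum_comm]
    simp only [← sum_mul, ih, sub_mul, one_mul, sum_sub_distrib, hP.sum_erase_eq_one_sub]
    ring

lemma tpow_add_avoidProb_le_one (hP : IsStochasticT P) (k : ℕ) (i : Fin n)
    (t : Fin (r + 1) → Fin n) : tpow P (k + 1) i t + avoidProb P (k + 1) i t ≤ 1 := by
  induction k generalizing t with
  | zero =>
    rw [zero_add, tpow_one, avoidProb_succ_apply]
    simp only [avoidProb_zero, one_mul, hP.sum_erase_eq_one_sub]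
    linarith
  | succ k ih =>
    calc tpow P (k + 2) i t + avoidProb P (k + 2) i t
        = tpow P (k + 1) i (Fin.cons i (Fin.init t)) * P i t + ∑ j ∈ univ.erase i,
            (tpow P (k + 1) i (Fin.cons j (Fin.init t))
              + avoidProb P (k + 1) i (Fin.cons j (Fin.init t))) * P j t := by
          rw [tpow_succ_apply, avoidProb_succ_apply, ← add_sum_erase _ _ (mem_univ i)]
          simp only [add_mul, sum_add_distrib]
          ring
      _ ≤ 1 * P i t + ∑ j ∈ univ.erase i, 1 * P j t :=
          add_le_add (mul_le_mul_of_nonneg_right (tpow_le_one hP _ _ _) (hP.1 i t).1)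
            (sum_le_sum fun j _ => mul_le_mul_of_nonneg_right (ih _) (hP.1 j t).1)
      _ = 1 := by
          simp only [one_mul, hP.sum_erase_eq_one_sub]
          ring

lemma avoidProb_add_le_mul (hP : IsStochasticT P) (i : Fin n) {L : ℕ} {M : ℝ}
    (hM : ∀ t, avoidProb P L i t ≤ M) (k : ℕ) (t : Fin (r + 1) → Fin n) :
    avoidProb P (k + L) i t ≤ avoidProb P k i t * M := by
  induction k generalizing t with
  | zero => simpa using hM t
  | succ k ih =>
    rw [Nat.add_right_comm, avoidProb_succ_apply, avoidProb_succ_apply, sum_mul]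
    refine sum_le_sum fun j _ => ?_
    rw [mul_right_comm]
    exact mul_le_mul_of_nonneg_right (ih _) (hP.1 j t).1

lemma avoidProb_mul_le_pow (hP : IsStochasticT P) (i : Fin n) {L : ℕ} {M : ℝ}
    (hM : ∀ t, avoidProb P L i t ≤ M) (q : ℕ) (t : Fin (r + 1) → Fin n) :
    avoidProb P (q * L) i t ≤ M ^ q := by
  induction q generalizing t with
  | zero => simp
  | succ q ih =>
    have hM0 : 0 ≤ M := (avoidProb_nonneg hP L i t).trans (hM t)
    calc avoidProb P ((q + 1) * L) i t
        ≤ avoidProb P (q * L) i t * M := by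
          rw [Nat.succ_mul]
          exact avoidProb_add_le_mul hP i hM _ t
      _ ≤ M ^ (q + 1) := by
          rw [pow_succ]
          exact mul_le_mul_of_nonneg_right (ih t) hM0

lemma ErgodicT.exists_avoidProb_le (hP : IsStochasticT P) (herg : ErgodicT P) (i : Fin n) :
    ∃ K M, 0 < K ∧ M < 1 ∧ ∀ t, avoidProb P K i t ≤ M := by
  have hvisit : ∀ t, ∃ k, 0 < k ∧ avoidProb P k i t < 1 := by
    intro t
    obtain ⟨k, hk, hpos⟩ := herg i t
    obtain ⟨k, rfl⟩ := Nat.exists_eq_add_of_le' hk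
    exact ⟨k + 1, k.succ_pos, by linarith [tpow_add_avoidProb_le_one hP k i t]⟩
  choose k hk_pos hk using hvisit
  set K := univ.sup k
  have hK : ∀ t, avoidProb P K i t < 1 := fun t =>
    (avoidProb_antitone hP i t (le_sup (mem_univ t))).trans_lt (hk t)
  have : Nonempty (Fin (r + 1) → Fin n) := ⟨fun _ => i⟩
  obtain ⟨t₀, ht₀⟩ := Finite.exists_max fun t => avoidProb P K i t
  exact ⟨K, _, (hk_pos t₀).trans_le (le_sup (mem_univ t₀)), hK t₀, ht₀⟩

lemma ErgodicT.tendsto_avoidProb (hP : IsStochasticT P) (herg : ErgodicT P) (i : Fin n)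
    (t : Fin (r + 1) → Fin n) : Tendsto (fun k => avoidProb P k i t) atTop (𝓝 0) := by
  obtain ⟨K, M, hK, hM1, hM⟩ := herg.exists_avoidProb_le hP i
  have hM0 : 0 ≤ M := (avoidProb_nonneg hP K i t).trans (hM t)
  have hsubseq : Tendsto (fun q => q * K) atTop atTop :=
    tendsto_atTop_mono (fun q => Nat.le_mul_of_pos_right q hK) tendsto_id
  rw [tendsto_iff_tendsto_subseq_of_antitone (avoidProb_antitone hP i t) hsubseq]
  exact squeeze_zero (fun q => avoidProb_nonneg hP _ i t) (fun q => avoidProb_mul_le_pow hP i hM q t)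
    (tendsto_pow_atTop_nhds_zero_of_lt_one hM0 hM1)

end AvoidProb

theorem ergodic_everReach_one_general (n r : ℕ)
    (P : HOTensor n r) (hP : IsStochasticT P) (herg : ErgodicT P) :
    ∀ (i : Fin n) (t : Fin (r + 1) → Fin n), everReach P i t = 1 := by
  intro i t
  have hsum : HasSum (fun k => fpp P k i t) 1 := by
    rw [hasSum_iff_tendsto_nat_of_nonneg (fun k => fpp_nonneg hP k i t)]
    simp only [sum_range_fpp_eq_one_sub_avoidProb hP]
    simpa using (herg.tendsto_avoidProb hP i t).const_sub 1
  exact hsum.tsum_eq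

/-- for an ergodic chain, all ever-reaching probabilities equal one. -/
theorem ergodic_everReach_one (n r : ℕ) (hn : 2 ≤ n) (hr : 1 ≤ r)
    (P : HOTensor n r) (hP : IsStochasticT P) (herg : ErgodicT P) :
    ∀ (i : Fin n) (t : Fin (r + 1) → Fin n), everReach P i t = 1 :=
  ergodic_everReach_one_general n r P hP herg
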